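/- Let r ≥ 3 and a_1, ..., a_r real numbers with Σ_{i=1}^r a_i = t. Then Σ_{1 ≤ i < j ≤ r} a_i a_j - a_1 a_2 ≤ (r-2)/(2(r-1)) · t². -/
import Mathlib


/-- Quadratic inequality underlying Chen's lemma: for real numbers `a₁,…,a_r`
with sum `t`, the sum of the products `aᵢaⱼ` over all pairs `i < j` except the
pair `(1,2)` is at most `(r-2)t²/(2(r-1))`. -/
theorem chen_quadratic_inequality (r : ℕ) (hr : 3 ≤ r) (a : Fin r → ℝ) (t : ℝ)
    (ht : t = ∑ i, a i) :
    (∑ i, ∑ j, if i < j then a i * a j else 0)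
        - a ⟨0, by omega⟩ * a ⟨1, by omega⟩ ≤
      ((r : ℝ) - 2) / (2 * ((r : ℝ) - 1)) * t ^ 2 := by
  have i0 : Fin r := ⟨0, by omega⟩
  set i0 : Fin r := ⟨0, by omega⟩ with hi0
  set i1 : Fin r := ⟨1, by omega⟩ with hi1
  have hne : i1 ≠ i0 := by simp [hi0, hi1, Fin.ext_iff]
  have hrpos : (0:ℝ) < (r:ℝ) - 1 := by
    have : (3:ℝ) ≤ (r:ℝ) := by exact_mod_cast hr
    linarith
  set S : ℝ := ∑ i, ∑ j, if i < j then a i * a j else 0 with hS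
  set Q : ℝ := ∑ i, (a i)^2 with hQ
  -- Step 1: 2 * S = t^2 - Q
  have key : 2 * S = t^2 - Q := by
    have h1 : t^2 = ∑ i : Fin r, ∑ j : Fin r, a i * a j := by
      rw [ht, sq, Finset.sum_mul_sum]
    have h2 : ∀ i : Fin r, ∑ j : Fin r, a i * a j
        = (∑ j, if i < j then a i * a j else 0)
        + ((∑ j, if j < i then a i * a j else 0) + (a i)^2) := by
      intro i
      have e : ∀ j : Fin r, a i * a j = (if i < j then a i * a j else 0)
          + ((if j < i then a i * a j else 0) + (if j = i then a i * a j else 0)) := by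
        intro j
        rcases lt_trichotomy i j with h | h | h
        · simp [h, not_lt.2 h.le, h.ne']
        · simp [h]
        · simp [h, not_lt.2 h.le, h.ne]
      rw [Finset.sum_congr rfl (fun j _ => e j), Finset.sum_add_distrib,
        Finset.sum_add_distrib, Finset.sum_ite_eq' Finset.univ i (fun j => a i * a j)]
      simp [sq]
    have h3 : (∑ i : Fin r, ∑ j : Fin r, if j < i then a i * a j else 0) = S := by
      rw [hS, Finset.sum_comm]
      apply Finset.sum_congr rfl; intro i _
      apply Finset.sum_congr rfl; intro j _
      rcases lt_or_ge i j with h | h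
      · simp [h, mul_comm]
      · simp [not_lt.2 h]
    have := h1
    rw [Finset.sum_congr rfl (fun i _ => h2 i)] at this
    rw [Finset.sum_add_distrib, Finset.sum_add_distrib, h3] at this
    rw [hQ]
    linarith [this]
  -- Step 2: Cauchy-Schwarz: t^2 ≤ (r-1) * (Q + 2 a i0 * a i1)
  have cs : t^2 ≤ ((r:ℝ) - 1) * (Q + 2 * a i0 * a i1) := by
    set b : Fin r → ℝ := fun i => if i = i1 then a i0 + a i1 else a i with hb
    set s : Finset (Fin r) := Finset.univ.erase i0 with hs
    have hcard : (s.card : ℝ) = (r:ℝ) - 1 := by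
      rw [hs, Finset.card_erase_of_mem (Finset.mem_univ _)]
      simp
      have : 1 ≤ r := by omega
      push_cast [this]
      ring
    have hmem1 : i1 ∈ s := Finset.mem_erase.2 ⟨hne, Finset.mem_univ _⟩
    have hsum : ∑ i ∈ s, b i = t := by
      rw [← Finset.add_sum_erase s b hmem1]
      have h1 : b i1 = a i0 + a i1 := by simp [hb]
      have h2 : ∑ i ∈ s.erase i1, b i = ∑ i ∈ s.erase i1, a i := by
        apply Finset.sum_congr rfl
        intro i hi
        have : i ≠ i1 := (Finset.mem_erase.1 hi).1
        simp [hb, this]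
      rw [h1, h2, ht, ← Finset.add_sum_erase Finset.univ a (Finset.mem_univ i0),
        ← Finset.add_sum_erase _ a hmem1]
      ring
    have hsq : ∑ i ∈ s, (b i)^2 = Q + 2 * a i0 * a i1 := by
      rw [← Finset.add_sum_erase s (fun i => (b i)^2) hmem1]
      have h2 : ∑ i ∈ s.erase i1, (b i)^2 = ∑ i ∈ s.erase i1, (a i)^2 := by
        apply Finset.sum_congr rfl
        intro i hi
        have : i ≠ i1 := (Finset.mem_erase.1 hi).1
        simp [hb, this]
      have hbval : b i1 = a i0 + a i1 := by simp [hb]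
      rw [hbval, h2, hQ, ← Finset.add_sum_erase Finset.univ (fun i => (a i)^2) (Finset.mem_univ i0),
        ← Finset.add_sum_erase _ (fun i => (a i)^2) hmem1]
      ring
    have := sq_sum_le_card_mul_sum_sq (s := s) (f := b)
    rw [hsum, hsq] at this
    calc t^2 ≤ (s.card : ℝ) * (Q + 2 * a i0 * a i1) := this
      _ = ((r:ℝ) - 1) * (Q + 2 * a i0 * a i1) := by rw [hcard]
  -- Final arithmetic
  rw [div_mul_eq_mul_div, le_div_iff₀ (by linarith)]
  nlinarith [key, cs]
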